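/- arXiv:2110.07071 — 3 statements merged into one kernel-verified Lean document; each statement's English description precedes it below -/
import Mathlib

section
/- Let (A, B) be an integral table algebra (possibly noncommutative) with splitting field K and Galois group G = Gal(K/ℚ), which acts faithfully on the rows of the character table P = (χ(b))_{χ ∈ Irr(A), b ∈ B}. Let H be the set of σ ∈ G such that there exists a permutation b ↦ b^σ of B with (χ(b))^σ = χ(b^σ) for all irreducible characters χ and all b ∈ B. Then H is a subgroup of G contained in the center Z(G). -/
/-!
Column permutations commute with row permutations: if `τ` permutes the columns of `P` by `π`,
then for every `σ` the row `ρ (σ * τ) χ` equals `P (ρ σ χ) ∘ π`, which is also the row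
`ρ (τ * σ) χ`. Distinct characters have distinct rows and `ρ` is faithful, so `σ * τ = τ * σ`.
-/

namespace Matrix

variable {G K X J : Type*} [Group G] [MulAction G K]

def columnPermSubgroup (P : Matrix X J K) : Subgroup G where
  carrier := {g | ∃ π : Equiv.Perm J, ∀ χ j, g • P χ j = P χ (π j)}
  one_mem' := ⟨1, by simp⟩
  mul_mem' := by
    rintro g₁ g₂ ⟨π₁, h₁⟩ ⟨π₂, h₂⟩
    exact ⟨π₁ * π₂, fun χ j => by rw [mul_smul, h₂, h₁, Equiv.Perm.mul_apply]⟩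
  inv_mem' := by
    rintro g ⟨π, h⟩
    refine ⟨π⁻¹, fun χ j => ?_⟩
    rw [inv_smul_eq_iff, h, Equiv.Perm.coe_inv, Equiv.apply_symm_apply]

theorem columnPermSubgroup_le_center (P : Matrix X J K) (hrows : Function.Injective P)
    (ρ : G →* Equiv.Perm X) (hρ_inj : Function.Injective ρ)
    (hρ : ∀ g χ j, g • P χ j = P (ρ g χ) j) :
    columnPermSubgroup P ≤ Subgroup.center G := by
  rintro τ ⟨π, hπ⟩
  refine Subgroup.mem_center_iff.2 fun σ =>
    hρ_inj <| Equiv.ext fun χ => hrows <| funext fun j => ?_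
  calc P (ρ (σ * τ) χ) j = σ • τ • P χ j := by rw [← hρ, mul_smul]
    _ = P (ρ σ χ) (π j) := by rw [hπ, hρ]
    _ = τ • σ • P χ j := by rw [← hπ, ← hρ]
    _ = P (ρ (τ * σ) χ) j := by rw [← mul_smul, hρ]

end Matrix

open Matrix in
theorem stmt3_general {K : Type*} [Field K] [Algebra ℚ K]
    {r : ℕ} {X : Type*}
    (P : X → Fin r → K)
    (hrows : Function.Injective fun χ : X => (P χ : Fin r → K))
    (ρ : (K ≃ₐ[ℚ] K) →* Equiv.Perm X) (hρ_inj : Function.Injective ρ)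
    (hρ : ∀ (τ : K ≃ₐ[ℚ] K) (χ : X) (j : Fin r), τ (P χ j) = P (ρ τ χ) j)
    (H : Set (K ≃ₐ[ℚ] K))
    (hH : H = {τ : K ≃ₐ[ℚ] K |
      ∃ π : Equiv.Perm (Fin r), ∀ (χ : X) (j : Fin r), τ (P χ j) = P χ (π j)}) :
    ∃ H' : Subgroup (K ≃ₐ[ℚ] K), (H' : Set (K ≃ₐ[ℚ] K)) = H ∧
      H' ≤ Subgroup.center (K ≃ₐ[ℚ] K) :=
  ⟨columnPermSubgroup P, hH.symm, columnPermSubgroup_le_center P hrows ρ hρ_inj hρ⟩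

/-- Let `K` be the splitting field (a finite Galois extension of
`ℚ`) of an integral table algebra, with Galois group `G` acting faithfully on
the rows of the character table `P`.  The set `H` of Galois automorphisms whose
entrywise action on `P` is realized by a permutation of the basis (columns) is
a subgroup of `G` contained in the center `Z(G)`. -/
theorem stmt3 {K : Type*} [Field K] [Algebra ℚ K] [FiniteDimensional ℚ K]
    {r : ℕ} {X : Type*} [Fintype X]
    (P : X → Fin r → K)
    (hrows : Function.Injective fun χ : X => (P χ : Fin r → K))
    (ρ : (K ≃ₐ[ℚ] K) →* Equiv.Perm X) (hρ_inj : Function.Injective ρ)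
    (hρ : ∀ (τ : K ≃ₐ[ℚ] K) (χ : X) (j : Fin r), τ (P χ j) = P (ρ τ χ) j)
    (H : Set (K ≃ₐ[ℚ] K))
    (hH : H = {τ : K ≃ₐ[ℚ] K |
      ∃ π : Equiv.Perm (Fin r), ∀ (χ : X) (j : Fin r), τ (P χ j) = P χ (π j)}) :
    ∃ H' : Subgroup (K ≃ₐ[ℚ] K), (H' : Set (K ≃ₐ[ℚ] K)) = H ∧
      H' ≤ Subgroup.center (K ≃ₐ[ℚ] K) :=
  stmt3_general P hrows ρ hρ_inj hρ H hH
end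

section
/- Let (A, B) be a commutative nonsymmetric table algebra with splitting field K and Galois group G = Gal(K/ℚ) acting faithfully on the rows of the character table. Then the restriction of complex conjugation to K is a nonidentity element of the center of G. In particular, G has a central element of order 2. -/
/-!
Complex conjugation maps the character value `χ i (b j)` to `χ i (b j^*)`, so on the character
table it acts on the rows exactly as the permutation `b ↦ b^*` acts on the columns. Since the Galois
action permutes rows while column permutations commute with row permutations, and the action is
faithful, conjugation commutes with every Galois automorphism. It is nontrivial because `σ ≠ id`
gives two distinct columns of an invertible table, hence a non-real entry.
-/

open ComplexConjugate

namespace Matrix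

variable {n R : Type*} [Fintype n] [DecidableEq n] [CommRing R]

theorem injective_of_det_ne_zero {M : Matrix n n R} (h : M.det ≠ 0) : Function.Injective M :=
  fun _ _ hrow => by_contra fun hne => h (det_zero_of_row_eq hne hrow)

theorem exists_ne_of_det_ne_zero {M : Matrix n n R} (h : M.det ≠ 0) {j j' : n} (hj : j ≠ j') :
    ∃ i, M i j ≠ M i j' :=
  Function.ne_iff.mp <| (injective_of_det_ne_zero (M := Mᵀ) (by rwa [det_transpose])).ne hj

end Matrix

theorem Subgroup.mem_center_of_smul_eq_column_perm {G ι κ X : Type*} [Group G] [SMul G X]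
    (ρ : G →* Equiv.Perm ι) (hρ_inj : Function.Injective ρ)
    (P : ι → κ → X) (hP_inj : Function.Injective P)
    (hρ : ∀ g i j, g • P i j = P (ρ g i) j)
    {c : G} {σ : κ → κ} (hc : ∀ i j, P (ρ c i) j = P i (σ j)) :
    c ∈ Subgroup.center G := by
  rw [Subgroup.mem_center_iff]
  intro g
  apply hρ_inj
  ext i : 1
  refine hP_inj (funext fun j => ?_)
  calc P (ρ (g * c) i) j = g • P i (σ j) := by rw [map_mul, Equiv.Perm.mul_apply, ← hρ, hc]
    _ = P (ρ (c * g) i) j := by rw [hρ, ← hc, map_mul, Equiv.Perm.mul_apply]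

theorem IntermediateField.mul_self_eq_one_of_coe_apply_eq_conj {K : IntermediateField ℚ ℂ}
    {c : K ≃ₐ[ℚ] K} (hc : ∀ x : K, (c x : ℂ) = conj (x : ℂ)) : c * c = 1 :=
  AlgEquiv.ext fun x => Subtype.ext <| by
    rw [AlgEquiv.mul_apply, hc, hc, Complex.conj_conj, AlgEquiv.one_apply]

theorem stmt6_general {r : ℕ} {A : Type*} [CommRing A] [Algebra ℂ A]
    (b : Module.Basis (Fin r) ℂ A)
    (σ : Fin r → Fin r)
    (hσ_ne : σ ≠ id)
    (χ : Fin r → (A →ₐ[ℂ] ℂ))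
    (hχ_conj : ∀ i j, χ i (b (σ j)) = starRingEnd ℂ (χ i (b j)))
    (hχ_units : IsUnit (Matrix.of fun i j => χ i (b j)))
    (K : IntermediateField ℚ ℂ)
    (P : Fin r → Fin r → K) (hP : ∀ i j, (P i j : ℂ) = χ i (b j))
    (ρ : (K ≃ₐ[ℚ] K) →* Equiv.Perm (Fin r)) (hρ_inj : Function.Injective ρ)
    (hρ : ∀ (τ : K ≃ₐ[ℚ] K) (i j : Fin r), τ (P i j) = P (ρ τ i) j)
    (c : K ≃ₐ[ℚ] K) (hc : ∀ x : K, (c x : ℂ) = starRingEnd ℂ (x : ℂ)) :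
    c ≠ 1 ∧ c ∈ Subgroup.center (K ≃ₐ[ℚ] K) ∧ orderOf c = 2 := by
  have hdet : (Matrix.of fun i j => χ i (b j)).det ≠ 0 :=
    ((Matrix.isUnit_iff_isUnit_det _).mp hχ_units).ne_zero
  have hP_inj : Function.Injective P := fun i i' h =>
    Matrix.injective_of_det_ne_zero hdet <| funext fun j => by
      simp only [Matrix.of_apply, ← hP, h]
  have hc_col : ∀ i j, P (ρ c i) j = P i (σ j) := fun i j => Subtype.ext <| by
    rw [← hρ, hc, hP, hP, hχ_conj]
  have hc_ne : c ≠ 1 := by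
    obtain ⟨j, hj⟩ := Function.ne_iff.mp hσ_ne
    obtain ⟨i, hi⟩ := Matrix.exists_ne_of_det_ne_zero hdet hj
    rintro rfl
    apply hi
    simpa only [Matrix.of_apply, ← hP, map_one, Equiv.Perm.one_apply, id] using
      congrArg Subtype.val (hc_col i j).symm
  refine ⟨hc_ne, Subgroup.mem_center_of_smul_eq_column_perm ρ hρ_inj P hP_inj hρ hc_col, ?_⟩
  exact orderOf_eq_prime (by rw [sq, IntermediateField.mul_self_eq_one_of_coe_apply_eq_conj hc]) hc_ne

/-- For a commutative nonsymmetric table algebra with splitting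
field `K` and Galois group `G = Gal(K/ℚ)` acting faithfully on the rows of the
character table, the restriction of complex conjugation to `K` is a
nonidentity central element of `G` of order 2. -/
theorem stmt6 {r : ℕ} (hr : 0 < r) {A : Type*} [CommRing A] [Algebra ℂ A]
    [FiniteDimensional ℂ A]
    (b : Module.Basis (Fin r) ℂ A) (hb0 : b ⟨0, hr⟩ = 1)
    (st : A → A) (hst_add : ∀ x y, st (x + y) = st x + st y)
    (hst_mul : ∀ x y, st (x * y) = st y * st x)
    (hst_smul : ∀ (z : ℂ) (x : A), st (z • x) = (starRingEnd ℂ z) • st x)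
    (σ : Fin r → Fin r) (hσ : ∀ i, σ (σ i) = i)
    (hσ_ne : σ ≠ id)
    (hbst : ∀ i, st (b i) = b (σ i))
    (lam : Fin r → Fin r → Fin r → ℝ) (hlam_nonneg : ∀ i j k, 0 ≤ lam i j k)
    (hmul : ∀ i j, b i * b j = ∑ k, (lam i j k : ℂ) • b k)
    (hpseudo : ∀ i j, 0 < lam i j ⟨0, hr⟩ ↔ j = σ i)
    (χ : Fin r → (A →ₐ[ℂ] ℂ)) (hχ_inj : Function.Injective χ)
    (hχ_conj : ∀ i j, χ i (b (σ j)) = starRingEnd ℂ (χ i (b j)))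
    (hχ_units : IsUnit (Matrix.of fun i j => χ i (b j)))
    (K : IntermediateField ℚ ℂ)
    (hK : K = IntermediateField.adjoin ℚ {x : ℂ | ∃ i j, x = χ i (b j)})
    (hfd : FiniteDimensional ℚ K)
    (P : Fin r → Fin r → K) (hP : ∀ i j, (P i j : ℂ) = χ i (b j))
    (ρ : (K ≃ₐ[ℚ] K) →* Equiv.Perm (Fin r)) (hρ_inj : Function.Injective ρ)
    (hρ : ∀ (τ : K ≃ₐ[ℚ] K) (i j : Fin r), τ (P i j) = P (ρ τ i) j)
    (c : K ≃ₐ[ℚ] K) (hc : ∀ x : K, (c x : ℂ) = starRingEnd ℂ (x : ℂ)) :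
    c ≠ 1 ∧ c ∈ Subgroup.center (K ≃ₐ[ℚ] K) ∧ orderOf c = 2 :=
  stmt6_general b σ hσ_ne χ hχ_conj hχ_units K P hP ρ hρ_inj hρ c hc
end

section
/- Let (A, B) be a commutative table algebra of rank r with standard basis B, degree map δ with values k_j = δ(b_j), order n, primitive idempotents e_0,...,e_{r-1} with e_i = (m_i/n) Σ_j (P_{i,j}/k_j) b_j^*, where P is the character table and m_i the multiplicities. Suppose Λ is a fusion with dual partition Λ*, and for I ∈ Λ* set ẽ_I = Σ_{i∈I} e_i, and let P̃, m̃, k̃ be the character table, multiplicities, and degrees of the fused algebra, with ẽ_I = (m̃_I/n) Σ_{J∈Λ} (P̃_{I,J}/k̃_J) b̃_J^*. Then for all J ∈ Λ and j ∈ J: Σ_{i∈I} m_i P_{i,j} = (k_j m̃_I / k̃_J) P̃_{I,J}. -/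
/-!
Both expressions for `ẽ_I` are expanded in the basis `b`, and the coefficients of `b_{σ j}` are
compared. Because `σ` is injective, that coefficient is `∑_{i ∈ I} (m_i/n)(P_{i,j}/k_j)` on the
left; because the blocks are disjoint, only the block `J ∋ j` contributes on the right, giving
`(m̃_I/n)(P̃_{I,J}/k̃_J)`. Clearing `n` and `k_j` gives the identity.
-/

open Finset

namespace Module.Basis

variable {ι κ R M : Type*} [CommSemiring R] [AddCommMonoid M] [Module R M]
  (b : Basis ι R M) {σ : κ → ι}

theorem repr_sum_smul_comp_apply [DecidableEq κ] (hσ : Function.Injective σ) (s : Finset κ)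
    (c : κ → R) (j : κ) :
    b.repr (∑ i ∈ s, c i • b (σ i)) (σ j) = if j ∈ s then c j else 0 := by
  classical
  simp only [map_sum, map_smul, repr_self, Finsupp.coe_finsetSum, Finset.sum_apply,
    Finsupp.smul_apply, Finsupp.single_apply, hσ.eq_iff, smul_eq_mul, mul_ite, mul_one, mul_zero,
    sum_ite_eq']

theorem repr_sum_smul_sum_blocks_apply [DecidableEq κ] {β : Type*} [Fintype β]
    (hσ : Function.Injective σ) (blocks : β → Finset κ)
    (hdisj : ∀ J J', J ≠ J' → Disjoint (blocks J) (blocks J')) (c : β → R)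
    {J : β} {j : κ} (hj : j ∈ blocks J) :
    b.repr (∑ J', c J' • ∑ i ∈ blocks J', b (σ i)) (σ j) = c J := by
  have hblock (J' : β) :
      b.repr (∑ i ∈ blocks J', b (σ i)) (σ j) = if j ∈ blocks J' then 1 else 0 := by
    simpa using b.repr_sum_smul_comp_apply hσ (blocks J') 1 j
  have hnot (J' : β) (hJ' : J' ≠ J) : j ∉ blocks J' := fun hmem =>
    disjoint_left.mp (hdisj J' J hJ') hmem hj
  rw [map_sum, Finsupp.coe_finsetSum, Finset.sum_apply]
  simp_rw [map_smul, Finsupp.smul_apply, hblock, smul_eq_mul]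
  rw [sum_eq_single J (fun J' _ hJ' => by rw [if_neg (hnot J' hJ'), mul_zero])
    (fun h => absurd (mem_univ J) h), if_pos hj, mul_one]

end Module.Basis

theorem stmt15_general {r s : ℕ} {A : Type*} [CommRing A] [Algebra ℂ A]
    (b : Module.Basis (Fin r) ℂ A)
    (σ : Fin r → Fin r) (hσ : ∀ i, σ (σ i) = i)
    (n : ℂ) (hn : n ≠ 0)
    (m k : Fin r → ℂ) (hk : ∀ j, k j ≠ 0)
    (P : Fin r → Fin r → ℂ)
    (e : Fin r → A)
    (he : ∀ i, e i = (m i / n) • ∑ j, (P i j / k j) • b (σ j))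
    -- the fused algebra data: blocks `Jb` partition the index set
    (Jb : Fin s → Finset (Fin r))
    (hdisj : ∀ J J' : Fin s, J ≠ J' → Disjoint (Jb J) (Jb J'))
    -- dual block `I`, fused multiplicity `m̃_I`, degrees `k̃`, character row `P̃_{I,·}`
    (I : Finset (Fin r)) (tm : ℂ) (tk : Fin s → ℂ)
    (tP : Fin s → ℂ)
    (hfused : ∑ i ∈ I, e i =
      (tm / n) • ∑ J : Fin s, (tP J / tk J) • (∑ j ∈ Jb J, b (σ j))) :
    ∀ J : Fin s, ∀ j ∈ Jb J,
      ∑ i ∈ I, m i * P i j = (k j * tm / tk J) * tP J := by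
  intro J j hj
  have hσinj : Function.Injective σ := Function.LeftInverse.injective hσ
  have hcoeff : ∑ i ∈ I, m i / n * (P i j / k j) = tm / n * (tP J / tk J) :=
    calc ∑ i ∈ I, m i / n * (P i j / k j) = b.repr (∑ i ∈ I, e i) (σ j) := by
          rw [map_sum, Finsupp.coe_finsetSum, Finset.sum_apply]
          simp_rw [he, map_smul, Finsupp.smul_apply, b.repr_sum_smul_comp_apply hσinj,
            if_pos (mem_univ j), smul_eq_mul]
    _ = tm / n * (tP J / tk J) := by
          rw [hfused, map_smul, Finsupp.smul_apply, smul_eq_mul,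
            b.repr_sum_smul_sum_blocks_apply hσinj Jb hdisj _ hj]
  have hclear : ∑ i ∈ I, m i * P i j = n * k j * ∑ i ∈ I, m i / n * (P i j / k j) := by
    rw [mul_sum]
    exact sum_congr rfl fun i _ => by field_simp [hk j]
  rw [hclear, hcoeff]
  field_simp

/-- Bannai–Song fusion condition on columns: comparing the
coefficients of `b_{j*}` in the two expressions for the fused primitive
idempotent `ẽ_I = ∑_{i ∈ I} e_i` gives, for every fused basis index `J` and
every `j ∈ J`:  `∑_{i ∈ I} m_i P_{i,j} = (k_j m̃_I / k̃_J) P̃_{I,J}`. -/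
theorem stmt15 {r s : ℕ} {A : Type*} [CommRing A] [Algebra ℂ A]
    [FiniteDimensional ℂ A]
    (b : Module.Basis (Fin r) ℂ A)
    (σ : Fin r → Fin r) (hσ : ∀ i, σ (σ i) = i)
    (n : ℂ) (hn : n ≠ 0)
    (m k : Fin r → ℂ) (hk : ∀ j, k j ≠ 0)
    (P : Fin r → Fin r → ℂ)
    (e : Fin r → A)
    (he : ∀ i, e i = (m i / n) • ∑ j, (P i j / k j) • b (σ j))
    -- the fused algebra data: blocks `Jb` partition the index set
    (Jb : Fin s → Finset (Fin r))
    (hdisj : ∀ J J' : Fin s, J ≠ J' → Disjoint (Jb J) (Jb J'))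
    (hcover : ∀ j : Fin r, ∃ J : Fin s, j ∈ Jb J)
    -- dual block `I`, fused multiplicity `m̃_I`, degrees `k̃`, character row `P̃_{I,·}`
    (I : Finset (Fin r)) (tm : ℂ) (tk : Fin s → ℂ) (htk : ∀ J, tk J ≠ 0)
    (tP : Fin s → ℂ)
    (hfused : ∑ i ∈ I, e i =
      (tm / n) • ∑ J : Fin s, (tP J / tk J) • (∑ j ∈ Jb J, b (σ j))) :
    ∀ J : Fin s, ∀ j ∈ Jb J,
      ∑ i ∈ I, m i * P i j = (k j * tm / tk J) * tP J :=
  stmt15_general b σ hσ n hn m k hk P e he Jb hdisj I tm tk tP hfused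
end
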